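/- arXiv:math/0403166 — 2 statements merged into one kernel-verified Lean document; each statement's English description precedes it below -/
import Mathlib

section
/- Let f be a Boolean monomial system whose dependency graph 𝒳 is strongly connected with loop number t ≥ 1. Then there exists m ≥ 1 such that for every k ≥ 0 and every vertex i, the i-th coordinate function of f^{mt+k} equals the square-free monomial ∏_{j ∈ C} x_j, where C = { j : there is a walk in 𝒳 from i to j whose length is congruent to k modulo t }; for k = 0 the set C is the loop equivalence class of i. -/
/-- `hasWalk E m a b` means there is a walk of length `m` from `a` to `b`
in the directed graph with edge relation `E` (walks of length 0 allowed). -/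
def hasWalk {V : Type*} (E : V → V → Prop) : ℕ → V → V → Prop
  | 0 => fun a b => a = b
  | m + 1 => fun a b => ∃ c, E a c ∧ hasWalk E m c b

/-- A directed graph is strongly connected if there is a walk between any
two vertices. -/
def StronglyConnected {V : Type*} (E : V → V → Prop) : Prop :=
  ∀ a b : V, ∃ m, hasWalk E m a b

/-- The loop number at a vertex `a`: the minimum `t ≥ 1` arising as the
difference of lengths of two closed walks at `a`, and `0` if there is no
closed walk of length `≥ 1` at `a` (so no such difference exists). -/
noncomputable def loopNumAt {V : Type*} (E : V → V → Prop) (a : V) : ℕ :=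
  sInf {t | 1 ≤ t ∧ ∃ p q, hasWalk E p a a ∧ hasWalk E q a a ∧ p = q + t}

/-- Evaluation of a monomial coordinate function: `none` is the constant 0,
`some S` is the square-free monomial `∏ j ∈ S, x j` (empty product = 1). -/
def monEval {ι : Type*} (c : Option (Finset ι)) (x : ι → ZMod 2) : ZMod 2 :=
  match c with
  | none => 0
  | some S => ∏ j ∈ S, x j

/-- The Boolean monomial system determined by the coordinate data `M`. -/
def sysEval {ι : Type*} (M : ι → Option (Finset ι)) (x : ι → ZMod 2) : ι → ZMod 2 :=
  fun i => monEval (M i) x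

/-- Edge relation of the dependency graph of a Boolean monomial system:
`i → j` iff `f i ≠ 0` and `x j` is a factor of `f i`. -/
def depEdge {ι : Type*} (M : ι → Option (Finset ι)) (i j : ι) : Prop :=
  ∃ S, M i = some S ∧ j ∈ S

/-- A map is a fixed point system if every trajectory reaches a fixed point. -/
def FixedPointSystem {α : Type*} (F : α → α) : Prop :=
  ∀ a, ∃ m, F^[m + 1] a = F^[m] a

/-- A glueing of the Boolean monomial system `M₂` (in variables `y`) to the
Boolean monomial system `M₁` (in variables `x`): the `x`-coordinates are
those of `M₁`, and the `i`-th `y`-coordinate is `g i` multiplied by the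
monomial in the `x`-variables given by `T i` (and is `0` when `g i = 0`). -/
def glue {r s : ℕ} (M₁ : Fin r → Option (Finset (Fin r)))
    (M₂ : Fin s → Option (Finset (Fin s))) (T : Fin s → Finset (Fin r)) :
    (Fin r ⊕ Fin s) → Option (Finset (Fin r ⊕ Fin s))
  | .inl i => (M₁ i).map (Finset.image Sum.inl)
  | .inr i => (M₂ i).map (fun S => S.image Sum.inr ∪ (T i).image Sum.inl)

attribute [local instance] Classical.propDecidable

lemma hasWalk_zero_iff {V : Type*} {E : V → V → Prop} {a b : V} :
    hasWalk E 0 a b ↔ a = b := Iff.rfl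

lemma hasWalk_succ_iff {V : Type*} {E : V → V → Prop} {m : ℕ} {a b : V} :
    hasWalk E (m + 1) a b ↔ ∃ c, E a c ∧ hasWalk E m c b := Iff.rfl

lemma hasWalk_trans {V : Type*} {E : V → V → Prop} {p q : ℕ} {a b c : V}
    (h1 : hasWalk E p a b) (h2 : hasWalk E q b c) : hasWalk E (p + q) a c := by
  induction p generalizing a with
  | zero =>
    have : a = b := h1
    subst this
    simpa using h2
  | succ p ih =>
    obtain ⟨d, hd, hw⟩ := h1
    rw [Nat.succ_add]
    exact ⟨d, hd, ih hw⟩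

lemma hasWalk_mul {V : Type*} {E : V → V → Prop} {d : ℕ} {b : V}
    (h : hasWalk E d b b) (x : ℕ) : hasWalk E (x * d) b b := by
  induction x with
  | zero =>
    rw [Nat.zero_mul]
    exact (rfl : b = b)
  | succ x ih =>
    have := hasWalk_trans ih h
    rwa [show x * d + d = (x + 1) * d by ring] at this

lemma zmod2_idem (a : ZMod 2) : a * a = a := by revert a; decide

lemma prod_union_idem {ι : Type*} [DecidableEq ι] (x : ι → ZMod 2) (A B : Finset ι) :
    ∏ j ∈ A ∪ B, x j = (∏ j ∈ A, x j) * ∏ j ∈ B, x j := by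
  have h := Finset.prod_union_inter (s₁ := A) (s₂ := B) (f := x)
  have h2 := Finset.prod_sdiff (f := x) (Finset.inter_subset_union (s := A) (t := B))
  calc ∏ j ∈ A ∪ B, x j
      = (∏ j ∈ (A ∪ B) \ (A ∩ B), x j) * ∏ j ∈ A ∩ B, x j := h2.symm
    _ = (∏ j ∈ (A ∪ B) \ (A ∩ B), x j) * ((∏ j ∈ A ∩ B, x j) * ∏ j ∈ A ∩ B, x j) := by
        rw [zmod2_idem]
    _ = ((∏ j ∈ (A ∪ B) \ (A ∩ B), x j) * (∏ j ∈ A ∩ B, x j)) * ∏ j ∈ A ∩ B, x j := by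
        ring
    _ = (∏ j ∈ A ∪ B, x j) * ∏ j ∈ A ∩ B, x j := by rw [h2]
    _ = _ := h

lemma prod_biUnion_idem {ι κ : Type*} [DecidableEq ι] [DecidableEq κ]
    (x : ι → ZMod 2) (s : Finset κ) (g : κ → Finset ι) :
    ∏ j ∈ s.biUnion g, x j = ∏ c ∈ s, ∏ j ∈ g c, x j := by
  induction s using Finset.induction_on with
  | empty => simp
  | @insert a s ha ih =>
    rw [Finset.biUnion_insert, prod_union_idem, Finset.prod_insert ha, ih]

lemma iter_formula {n : ℕ} (M : Fin n → Option (Finset (Fin n)))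
    (hM : ∀ i, ∃ S, M i = some S) (m : ℕ) (x : Fin n → ZMod 2) (i : Fin n) :
    (sysEval M)^[m] x i =
      ∏ j ∈ Finset.univ.filter (fun j => hasWalk (depEdge M) m i j), x j := by
  induction m generalizing i with
  | zero =>
    simp only [Function.iterate_zero, id]
    have h : Finset.univ.filter (fun j => hasWalk (depEdge M) 0 i j) = {i} := by
      ext j
      simp [hasWalk_zero_iff, eq_comm]
    rw [h, Finset.prod_singleton]
  | succ m ih =>
    rw [Function.iterate_succ_apply']
    obtain ⟨S, hS⟩ := hM i
    show monEval (M i) ((sysEval M)^[m] x) = _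
    rw [hS]
    simp only [monEval]
    calc ∏ c ∈ S, (sysEval M)^[m] x c
        = ∏ c ∈ S, ∏ j ∈ Finset.univ.filter (fun j => hasWalk (depEdge M) m c j), x j :=
          Finset.prod_congr rfl (fun c _ => ih c)
      _ = ∏ j ∈ S.biUnion (fun c => Finset.univ.filter (fun j => hasWalk (depEdge M) m c j)), x j :=
          (prod_biUnion_idem x S _).symm
      _ = _ := by
          apply Finset.prod_congr _ (fun _ _ => rfl)
          ext j
          simp only [Finset.mem_biUnion, Finset.mem_filter, Finset.mem_univ, true_and,
            hasWalk_succ_iff]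
          constructor
          · rintro ⟨c, hc, hw⟩
            exact ⟨c, ⟨S, hS, hc⟩, hw⟩
          · rintro ⟨c, ⟨S', hS', hc⟩, hw⟩
            rw [hS] at hS'
            injection hS' with h'
            exact ⟨c, h' ▸ hc, hw⟩

/-- If the dependency graph of a Boolean monomial system is
strongly connected with loop number `t ≥ 1`, then there is an `m ≥ 1` such
that for every `k ≥ 0` and every vertex `i`, the `i`-th coordinate of
`f^(m·t + k)` is the square-free monomial `∏_{j ∈ C} x j`, where
`C = {j : there is a walk from i to j of length ≡ k (mod t)}` (for `k = 0`
this is the loop equivalence class of `i`). -/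
theorem statement8 {n : ℕ} (hn : 1 ≤ n) (M : Fin n → Option (Finset (Fin n)))
    (hsc : StronglyConnected (depEdge M)) (t : ℕ) (ht : 1 ≤ t)
    (hloop : ∀ a, loopNumAt (depEdge M) a = t) :
    ∃ m, 1 ≤ m ∧ ∀ (k : ℕ) (i : Fin n) (x : Fin n → ZMod 2),
      (sysEval M)^[m * t + k] x i =
        ∏ j ∈ Finset.univ.filter
            (fun j : Fin n => ∃ ℓ, hasWalk (depEdge M) ℓ i j ∧ ℓ % t = k % t),
          x j := by
  classical
  -- every closed-walk pair with difference t exists at every vertex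
  have key : ∀ b : Fin n, ∃ p q, hasWalk (depEdge M) p b b ∧ hasWalk (depEdge M) q b b ∧
      p = q + t := by
    intro b
    have hb := hloop b
    unfold loopNumAt at hb
    have hne : {t' | 1 ≤ t' ∧ ∃ p q, hasWalk (depEdge M) p b b ∧ hasWalk (depEdge M) q b b ∧
        p = q + t'}.Nonempty := by
      by_contra hcon
      rw [Set.not_nonempty_iff_eq_empty] at hcon
      rw [hcon, Nat.sInf_empty] at hb
      omega
    have hmem := Nat.sInf_mem hne
    rw [hb] at hmem
    exact hmem.2
  -- every coordinate is a nonzero monomial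
  have hM : ∀ i, ∃ S, M i = some S := by
    intro i
    obtain ⟨p, q, hp, -, hpq⟩ := key i
    cases p with
    | zero => omega
    | succ p' =>
      obtain ⟨c, hc, -⟩ := hp
      obtain ⟨S, hS, -⟩ := hc
      exact ⟨S, hS⟩
  -- base vertex
  set a : Fin n := ⟨0, hn⟩ with hadef
  obtain ⟨p, q, hp, hq, hpq⟩ := key a
  subst hpq
  set Q := q * q + q with hQdef
  -- all large multiples of t are closed-walk lengths at a
  have hA : ∀ C, Q ≤ C → hasWalk (depEdge M) (C * t) a a := by
    intro C hCge
    rcases Nat.eq_zero_or_pos q with hq0 | hq1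
    · have hpt : hasWalk (depEdge M) t a a := by rw [hq0] at hp; simpa using hp
      exact hasWalk_mul hpt C
    · obtain ⟨u, xx, hdm, hx⟩ : ∃ u xx, q * u + xx = C ∧ xx < q :=
        ⟨C / q, C % q, Nat.div_add_mod C q, Nat.mod_lt _ hq1⟩
      have hCge' : q * q + q ≤ C := by rw [hQdef] at hCge; exact hCge
      have hqq : q * q < q * u := by nlinarith [hdm, hx, hCge']
      have hu : q < u := Nat.lt_of_mul_lt_mul_left hqq
      have hxu : xx ≤ u * t :=
        le_trans (le_of_lt (hx.trans hu)) (Nat.le_mul_of_pos_right _ (by omega))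
      have key2 : xx * (q + t) + (u * t - xx) * q = C * t := by
        zify [hxu]
        have hdm' : (q : ℤ) * u + xx = C := by exact_mod_cast hdm
        linear_combination (t : ℤ) * hdm'
      have w := hasWalk_trans (hasWalk_mul hp xx) (hasWalk_mul hq (u * t - xx))
      rwa [key2] at w
  -- t divides every closed walk length at a
  have hB : ∀ u, hasWalk (depEdge M) u a a → t ∣ u := by
    intro u hu
    by_contra hnd
    have hr0 : u % t ≠ 0 := fun h => hnd (Nat.dvd_of_mod_eq_zero h)
    have hrt : u % t < t := Nat.mod_lt _ (by omega)
    have w1 : hasWalk (depEdge M) (u + Q * t) a a := hasWalk_trans hu (hA Q le_rfl)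
    have w2 : hasWalk (depEdge M) ((Q + u / t) * t) a a := hA _ (Nat.le_add_right _ _)
    have keyB : u + Q * t = (Q + u / t) * t + u % t := by
      have h := Nat.div_add_mod u t
      calc u + Q * t = Q * t + (t * (u / t) + u % t) := by rw [h]; ring
        _ = (Q + u / t) * t + u % t := by ring
    have hmemB : u % t ∈ {t' | 1 ≤ t' ∧ ∃ p q, hasWalk (depEdge M) p a a ∧
        hasWalk (depEdge M) q a a ∧ p = q + t'} :=
      ⟨by omega, u + Q * t, (Q + u / t) * t, w1, w2, keyB⟩
    have hle : loopNumAt (depEdge M) a ≤ u % t := Nat.sInf_le hmemB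
    rw [hloop a] at hle
    omega
  -- choose explicit walks between all pairs
  choose g hg using hsc
  set B₁ := (Finset.univ : Finset (Fin n × Fin n)).sup (fun ij => g ij.1 ij.2) with hB₁def
  have hgB : ∀ i j : Fin n, g i j ≤ B₁ := fun i j =>
    Finset.le_sup (f := fun ij : Fin n × Fin n => g ij.1 ij.2) (Finset.mem_univ (i, j))
  -- t divides every closed walk length anywhere
  have hC : ∀ (b : Fin n) (u : ℕ), hasWalk (depEdge M) u b b → t ∣ u := by
    intro b u hu
    have d1 := hB _ (hasWalk_trans (hg a b) (hasWalk_trans hu (hg b a)))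
    have d2 := hB _ (hasWalk_trans (hg a b) (hg b a))
    have heq : u = (g a b + (u + g b a)) - (g a b + g b a) := by omega
    rw [heq]
    exact Nat.dvd_sub d1 d2
  -- any two walks between the same endpoints are congruent mod t
  have hD : ∀ (i j : Fin n) (ℓ₁ ℓ₂ : ℕ), hasWalk (depEdge M) ℓ₁ i j →
      hasWalk (depEdge M) ℓ₂ i j → ℓ₁ % t = ℓ₂ % t := by
    intro i j ℓ₁ ℓ₂ h1 h2
    have d1 := hC i _ (hasWalk_trans h1 (hg j i))
    have d2 := hC i _ (hasWalk_trans h2 (hg j i))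
    have m1 : ℓ₁ + g j i ≡ 0 [MOD t] := Nat.modEq_zero_iff_dvd.mpr d1
    have m2 : ℓ₂ + g j i ≡ 0 [MOD t] := Nat.modEq_zero_iff_dvd.mpr d2
    exact Nat.ModEq.add_right_cancel' (g j i) (m1.trans m2.symm)
  set m := 3 * B₁ + Q + 1 with hmdef
  refine ⟨m, by rw [hmdef]; omega, ?_⟩
  intro k i x
  rw [iter_formula M hM]
  apply Finset.prod_congr _ (fun _ _ => rfl)
  ext j
  simp only [Finset.mem_filter, Finset.mem_univ, true_and]
  constructor
  · intro h
    exact ⟨m * t + k, h, by rw [Nat.add_comm (m * t) k, Nat.add_mul_mod_self_right]⟩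
  · rintro ⟨ℓ, hw, hk⟩
    have hℓ₀ := hg i j
    have hcong : g i j % t = k % t := by rw [hD i j (g i j) ℓ hℓ₀ hw]; exact hk
    have he : t ∣ g j a + g a j := hC j _ (hasWalk_trans (hg j a) (hg a j))
    have hXb : g i j + g j a + g a j ≤ 3 * B₁ := by
      have h1 := hgB i j; have h2 := hgB j a; have h3 := hgB a j; omega
    have h3B : 3 * B₁ ≤ 3 * B₁ * t := Nat.le_mul_of_pos_right _ (by omega)
    have hmt : m * t = 3 * B₁ * t + (Q * t + t) := by rw [hmdef]; ring
    have hXL : g i j + g j a + g a j ≤ m * t + k :=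
      calc g i j + g j a + g a j ≤ 3 * B₁ := hXb
        _ ≤ 3 * B₁ * t := h3B
        _ ≤ m * t := by rw [hmt]; exact Nat.le_add_right _ _
        _ ≤ m * t + k := Nat.le_add_right _ _
    have hts : t ∣ (m * t + k) - (g i j + g j a + g a j) := by
      apply (Nat.modEq_iff_dvd' hXL).mp
      obtain ⟨w, hw'⟩ := he
      show (g i j + g j a + g a j) % t = (m * t + k) % t
      rw [Nat.add_assoc, hw', Nat.mul_comm t w, Nat.add_mul_mod_self_right, hcong,
        Nat.add_comm (m * t) k, Nat.add_mul_mod_self_right]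
    obtain ⟨c, hc⟩ := hts
    have hsQ : Q * t ≤ m * t + k - (g i j + g j a + g a j) := by
      apply Nat.le_sub_of_add_le
      calc Q * t + (g i j + g j a + g a j) ≤ Q * t + 3 * B₁ * t :=
            Nat.add_le_add_left (hXb.trans h3B) _
        _ ≤ m * t := by
            rw [hmt]
            have hre : 3 * B₁ * t + (Q * t + t) = (Q * t + 3 * B₁ * t) + t := by ring
            rw [hre]
            exact Nat.le_add_right _ _
        _ ≤ m * t + k := Nat.le_add_right _ _
    have hcQ : Q ≤ c := by
      have h1 : Q * t ≤ t * c := hc ▸ hsQ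
      rw [Nat.mul_comm t c] at h1
      exact Nat.le_of_mul_le_mul_right h1 (by omega)
    have hws : hasWalk (depEdge M) (t * c) a a := by
      rw [Nat.mul_comm]
      exact hA c hcQ
    have hXs : (g i j + g j a + g a j) + t * c = m * t + k := by
      rw [← hc]
      exact Nat.add_sub_cancel' hXL
    have hfinal := hasWalk_trans hℓ₀ (hasWalk_trans (hg j a) (hasWalk_trans hws (hg a j)))
    have heq2 : g i j + (g j a + (t * c + g a j)) = m * t + k := by
      rw [← hXs]; ring
    rwa [heq2] at hfinal
end

section
/- Let f be a Boolean monomial system whose dependency graph is strongly connected with loop number t ≥ 1. Then f is a fixed point system if and only if t = 1. -/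
/-! Since `x ^ 2 = x` over `𝔽₂`, coordinate `i` of `f^m(x)` is the product of the `x j` over the
endpoints `j` of the walks of length `m` starting at `i`, so it vanishes exactly when such a
walk ends at a zero of `x`.

If `t = 1`, some vertex carries closed walks of lengths `q` and `q + 1`, hence of every length
`≥ q²`; by strong connectivity there are then walks of every large length between any two
vertices, and `f^m(x)` is eventually the constant `∏ j, x j`.

Conversely, start from the point that vanishes only at a vertex `a`. Once its orbit is
stationary, a closed walk at `a` of some length `k` beyond that time forces a closed walk of
length `k + 1`, so the loop number at `a` is `1`. -/

open Finset

section Walks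

variable {V : Type*} {E : V → V → Prop}

lemma hasWalk_add {m k : ℕ} {a b c : V} (hab : hasWalk E m a b) (hbc : hasWalk E k b c) :
    hasWalk E (m + k) a c := by
  induction m generalizing a with
  | zero => cases hab; simpa using hbc
  | succ m ih =>
    obtain ⟨d, had, hdb⟩ := hab
    rw [Nat.succ_add]
    exact ⟨d, had, ih hdb⟩

lemma hasWalk_mul_s11 {m : ℕ} {a : V} (h : hasWalk E m a a) (k : ℕ) : hasWalk E (k * m) a a := by
  induction k with
  | zero => rw [zero_mul]; rfl
  | succ k ih => simpa [add_mul, add_comm] using hasWalk_add h ih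

lemma hasWalk_of_sq_le {q m : ℕ} {a : V} (hq : hasWalk E q a a) (hq' : hasWalk E (q + 1) a a)
    (hm : q * q ≤ m) : hasWalk E m a a := by
  -- `m % q < q ≤ m / q`, so the subtraction below does not truncate.
  have hlen : (m / q - m % q) * q + m % q * (q + 1) = m := by
    rcases Nat.eq_zero_or_pos q with rfl | hpos
    · simp
    have hmod : m % q ≤ m / q := (Nat.mod_lt m hpos).le.trans ((Nat.le_div_iff_mul_le hpos).2 hm)
    obtain ⟨d, hd⟩ := Nat.exists_eq_add_of_le hmod
    have hdiv := Nat.div_add_mod m q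
    rw [hd, Nat.add_sub_cancel_left]
    rw [hd] at hdiv
    linear_combination hdiv
  simpa [hlen] using hasWalk_add (hasWalk_mul_s11 hq (m / q - m % q)) (hasWalk_mul_s11 hq' (m % q))

lemma StronglyConnected.exists_forall_hasWalk [Fintype V] (hE : StronglyConnected E) {q : ℕ}
    {a : V} (hq : hasWalk E q a a) (hq' : hasWalk E (q + 1) a a) :
    ∃ N, ∀ m ≥ N, ∀ i j, hasWalk E m i j := by
  choose w hw using hE
  refine ⟨(univ.sup fun i => w i a) + q * q + univ.sup fun j => w a j, fun m hm i j => ?_⟩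
  have hi : w i a ≤ univ.sup fun i => w i a := le_sup (f := fun i => w i a) (mem_univ i)
  have hj : w a j ≤ univ.sup fun j => w a j := le_sup (f := fun j => w a j) (mem_univ j)
  have hmid : hasWalk E (m - w i a - w a j) a a := hasWalk_of_sq_le hq hq' (by omega)
  have hwalk := hasWalk_add (hasWalk_add (hw i a) hmid) (hw a j)
  rwa [show w i a + (m - w i a - w a j) + w a j = m by omega] at hwalk

lemma exists_hasWalk_of_loopNumAt_pos {a : V} (h : 0 < loopNumAt E a) :
    ∃ q, hasWalk E (q + loopNumAt E a) a a ∧ hasWalk E q a a := by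
  have hne : {t | 1 ≤ t ∧ ∃ p q, hasWalk E p a a ∧ hasWalk E q a a ∧ p = q + t}.Nonempty := by
    by_contra hempty
    rw [Set.not_nonempty_iff_eq_empty] at hempty
    rw [loopNumAt, hempty, Nat.sInf_empty] at h
    exact h.false
  obtain ⟨-, p, q, hp, hq, rfl⟩ := Nat.sInf_mem hne
  exact ⟨q, hp, hq⟩

lemma loopNumAt_le_one {k : ℕ} {a : V} (hk : hasWalk E k a a) (hk' : hasWalk E (k + 1) a a) :
    loopNumAt E a ≤ 1 :=
  Nat.sInf_le ⟨le_rfl, k + 1, k, hk', hk, rfl⟩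

end Walks

lemma ZMod.two_eq_iff {x y : ZMod 2} : x = y ↔ (x = 0 ↔ y = 0) := by
  revert x y; decide

lemma iterate_succ_eq_of_le {α : Type*} {F : α → α} {a : α} {m k : ℕ}
    (hm : F^[m + 1] a = F^[m] a) (hk : m ≤ k) : F^[k + 1] a = F^[k] a := by
  obtain ⟨j, rfl⟩ := Nat.exists_eq_add_of_le hk
  have hfix : Function.IsFixedPt F (F^[m] a) := by rwa [Function.iterate_succ_apply'] at hm
  rw [Function.iterate_succ_apply', add_comm, Function.iterate_add_apply, (hfix.iterate j).eq]
  exact hfix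

section MonomialSystems

variable {ι : Type*} {M : ι → Option (Finset ι)}

lemma sysEval_iterate_apply_eq_zero_iff (hM : ∀ i, M i ≠ none) (m : ℕ) (x : ι → ZMod 2)
    (i : ι) : (sysEval M)^[m] x i = 0 ↔ ∃ j, hasWalk (depEdge M) m i j ∧ x j = 0 := by
  induction m generalizing i with
  | zero => simp [hasWalk]
  | succ m ih =>
    obtain ⟨S, hS⟩ := Option.ne_none_iff_exists'.1 (hM i)
    rw [Function.iterate_succ_apply', sysEval, hS, monEval, prod_eq_zero_iff]
    simp only [ih, hasWalk, depEdge, hS, Option.some.injEq, exists_eq_left']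
    exact ⟨fun ⟨c, hc, j, hj, hx⟩ => ⟨j, ⟨c, hc, hj⟩, hx⟩,
      fun ⟨j, ⟨c, hc, hj⟩, hx⟩ => ⟨c, hc, j, hj, hx⟩⟩

lemma sysEval_iterate_eventually_const (hM : ∀ i, M i ≠ none) {N : ℕ}
    (hN : ∀ m ≥ N, ∀ i j, hasWalk (depEdge M) m i j) (x : ι → ZMod 2) :
    (sysEval M)^[N + 1] x = (sysEval M)^[N] x := by
  funext i
  rw [ZMod.two_eq_iff, sysEval_iterate_apply_eq_zero_iff hM, sysEval_iterate_apply_eq_zero_iff hM]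
  simp only [hN N le_rfl i, hN (N + 1) (by omega) i, true_and]

lemma ne_none_of_depEdge {i j : ι} (h : depEdge M i j) : M i ≠ none := by
  obtain ⟨S, hS, -⟩ := h
  simp [hS]

lemma FixedPointSystem.loopNumAt_depEdge_le_one [DecidableEq ι] (hM : ∀ i, M i ≠ none)
    (hfix : FixedPointSystem (sysEval M)) {a : ι} {L : ℕ} (hL : 0 < L)
    (ha : hasWalk (depEdge M) L a a) : loopNumAt (depEdge M) a ≤ 1 := by
  have hzero (k : ℕ) :
      (sysEval M)^[k] (Function.update 1 a 0) a = 0 ↔ hasWalk (depEdge M) k a a := by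
    rw [sysEval_iterate_apply_eq_zero_iff hM]
    simp [Function.update_apply]
  obtain ⟨m, hm⟩ := hfix (Function.update 1 a 0)
  have hk : hasWalk (depEdge M) (m * L) a a := hasWalk_mul_s11 ha m
  have hstat := congrFun (iterate_succ_eq_of_le hm (Nat.le_mul_of_pos_right m hL)) a
  rw [ZMod.two_eq_iff, hzero, hzero] at hstat
  exact loopNumAt_le_one hk (hstat.2 hk)

lemma fixedPointSystem_sysEval [Fintype ι] (hM : ∀ i, M i ≠ none)
    (hsc : StronglyConnected (depEdge M)) {a : ι} {q : ℕ} (hq : hasWalk (depEdge M) q a a)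
    (hq' : hasWalk (depEdge M) (q + 1) a a) : FixedPointSystem (sysEval M) := by
  obtain ⟨N, hN⟩ := hsc.exists_forall_hasWalk hq hq'
  exact fun x => ⟨N, sysEval_iterate_eventually_const hM hN x⟩

end MonomialSystems

/-- A Boolean monomial system whose dependency graph is strongly
connected with loop number `t ≥ 1` is a fixed point system iff `t = 1`. -/
theorem statement11 {n : ℕ} (hn : 1 ≤ n) (M : Fin n → Option (Finset (Fin n)))
    (hsc : StronglyConnected (depEdge M)) (t : ℕ) (ht : 1 ≤ t)
    (hloop : ∀ a, loopNumAt (depEdge M) a = t) :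
    FixedPointSystem (sysEval M) ↔ t = 1 := by
  have hcycle (a : Fin n) : ∃ q, hasWalk (depEdge M) (q + t) a a ∧ hasWalk (depEdge M) q a a := by
    rw [← hloop a]
    exact exists_hasWalk_of_loopNumAt_pos (by rw [hloop a]; exact ht)
  have hM (i : Fin n) : M i ≠ none := by
    obtain ⟨q, hq, -⟩ := hcycle i
    obtain ⟨j, hij, -⟩ : hasWalk (depEdge M) ((q + t - 1) + 1) i i := by
      rwa [Nat.sub_add_cancel (by omega)]
    exact ne_none_of_depEdge hij
  let a : Fin n := ⟨0, hn⟩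
  obtain ⟨q, hq', hq⟩ := hcycle a
  constructor
  · intro hfix
    have := hfix.loopNumAt_depEdge_le_one hM (by omega) hq'
    rw [hloop a] at this
    omega
  · rintro rfl
    exact fixedPointSystem_sysEval hM hsc hq hq'
end
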